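/- The function F(N_E) := N_E · (τ_E + I_1(N_E, N_I(N_E))) is differentiable on (0, 1/τ_E) with F'(N_E) = I_1(N_E, N_I(N_E)) + τ_E + N_E · [−b_E^E/√a_E + (b_I^E/√a_E)·N_I'(N_E)] · ∫_0^∞ e^{-s²/2} (e^{s·w_F} − e^{s·w_R}) ds, where w_F and w_R are evaluated at (N_E, N_I(N_E)). -/

import Mathlib

/-- K(w_R, w_F) := ∫_0^∞ (e^{-s²/2}/s)(e^{s·w_F} − e^{s·w_R}) ds (Lebesgue integral on (0,∞)). -/
noncomputable def K (wR wF : ℝ) : ℝ :=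
  ∫ s in Set.Ioi (0 : ℝ), Real.exp (-s ^ 2 / 2) / s * (Real.exp (s * wF) - Real.exp (s * wR))

/-- w_F(N_E,N_I) := (V_F − V_0^E(N_E,N_I))/√a_E with
V_0^E(N_E,N_I) := b_E^E N_E − b_I^E N_I + (b_E^E − b_E^E) ν_{E,ext}. -/
noncomputable def wFE (VR VF bEE bIE aE ν NE NI : ℝ) : ℝ :=
  (VF - (bEE * NE - bIE * NI + (bEE - bEE) * ν)) / Real.sqrt aE

/-- w_R(N_E,N_I) := (V_R − V_0^E(N_E,N_I))/√a_E. -/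
noncomputable def wRE (VR VF bEE bIE aE ν NE NI : ℝ) : ℝ :=
  (VR - (bEE * NE - bIE * NI + (bEE - bEE) * ν)) / Real.sqrt aE

/-- I₁(N_E,N_I) := ∫_0^∞ (e^{-s²/2}/s)(e^{s·w_F} − e^{s·w_R}) ds. -/
noncomputable def I1 (VR VF bEE bIE aE ν NE NI : ℝ) : ℝ :=
  K (wRE VR VF bEE bIE aE ν NE NI) (wFE VR VF bEE bIE aE ν NE NI)

/-- I₂(N_E,N_I) with V_0^I(N_E,N_I) := b_E^I N_E − b_I^I N_I + (b_E^I − b_E^E) ν_{E,ext}. -/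
noncomputable def I2 (VR VF bEE bEI bII aI ν NE NI : ℝ) : ℝ :=
  K ((VR - (bEI * NE - bII * NI + (bEI - bEE) * ν)) / Real.sqrt aI)
    ((VF - (bEI * NE - bII * NI + (bEI - bEE) * ν)) / Real.sqrt aI)

/-! Along the curve `N_E ↦ (N_E, N_I(N_E))` both arguments of `K` in `I₁` are translated by the
same amount `(b_I^E N_I(N_E) - b_E^E N_E)/√a_E` (the `ν` term cancels). A common translation of the
arguments of `K` differentiates, under the integral sign, to the integral of the theorem, and the
rest is the chain and product rules. -/

open MeasureTheory Real Set Filter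

lemma integrable_exp_neg_sq_div_two_add_mul (c : ℝ) :
    Integrable (fun s : ℝ => exp (-s ^ 2 / 2 + c * s)) := by
  have hgauss : Integrable (fun s : ℝ => exp (-(1 / 2 : ℝ) * s ^ 2)) :=
    integrable_exp_neg_mul_sq (by norm_num)
  have hshift : Integrable (fun s : ℝ => exp (-(1 / 2 : ℝ) * (s - c) ^ 2)) :=
    hgauss.comp_sub_right c
  refine (hshift.const_mul (exp (c ^ 2 / 2))).congr (Eventually.of_forall fun s => ?_)
  simp only [← exp_add]
  ring_nf

lemma abs_exp_sub_exp_le (x y : ℝ) : |exp x - exp y| ≤ |x - y| * (exp x + exp y) := by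
  wlog hyx : y ≤ x generalizing x y
  · rw [abs_sub_comm, abs_sub_comm x, add_comm]
    exact this y x (le_of_not_ge hyx)
  have hmono : exp y ≤ exp x := exp_le_exp.2 hyx
  have htangent : y - x + 1 ≤ exp (y - x) := add_one_le_exp _
  have hratio : exp y = exp x * exp (y - x) := by rw [← exp_add]; ring_nf
  rw [abs_of_nonneg (sub_nonneg.2 hmono), abs_of_nonneg (sub_nonneg.2 hyx)]
  nlinarith [exp_pos x, exp_pos y]

lemma norm_K_integrand_le {s : ℝ} (hs : 0 < s) (a b : ℝ) :
    ‖exp (-s ^ 2 / 2) / s * (exp (s * b) - exp (s * a))‖ ≤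
      |b - a| * (exp (-s ^ 2 / 2 + b * s) + exp (-s ^ 2 / 2 + a * s)) := by
  have hexp : |exp (s * b) - exp (s * a)| ≤ s * |b - a| * (exp (s * b) + exp (s * a)) := by
    calc |exp (s * b) - exp (s * a)| ≤ |s * b - s * a| * (exp (s * b) + exp (s * a)) :=
          abs_exp_sub_exp_le _ _
      _ = s * |b - a| * (exp (s * b) + exp (s * a)) := by
          rw [← mul_sub, abs_mul, abs_of_pos hs]
  rw [Real.norm_eq_abs, abs_mul, abs_of_pos (div_pos (exp_pos _) hs)]
  calc exp (-s ^ 2 / 2) / s * |exp (s * b) - exp (s * a)|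
      ≤ exp (-s ^ 2 / 2) / s * (s * |b - a| * (exp (s * b) + exp (s * a))) := by gcongr
    _ = |b - a| * (exp (-s ^ 2 / 2 + b * s) + exp (-s ^ 2 / 2 + a * s)) := by
        simp only [exp_add]
        field_simp

lemma integrableOn_K_integrand (a b : ℝ) :
    IntegrableOn (fun s => exp (-s ^ 2 / 2) / s * (exp (s * b) - exp (s * a))) (Ioi 0) := by
  refine Integrable.mono' (((integrable_exp_neg_sq_div_two_add_mul b).add
    (integrable_exp_neg_sq_div_two_add_mul a)).const_mul |b - a|).integrableOn
    (by fun_prop) ?_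
  filter_upwards [self_mem_ae_restrict measurableSet_Ioi] with s hs
  exact norm_K_integrand_le hs a b

lemma norm_K_deriv_integrand_le {s a b a' b' : ℝ} (hs : 0 ≤ s) (ha : a ≤ a') (hb : b ≤ b') :
    ‖exp (-s ^ 2 / 2) * (exp (s * b) - exp (s * a))‖ ≤
      exp (-s ^ 2 / 2 + b' * s) + exp (-s ^ 2 / 2 + a' * s) := by
  have hb' : exp (s * b) ≤ exp (b' * s) := exp_le_exp.2 (by nlinarith)
  have ha' : exp (s * a) ≤ exp (a' * s) := exp_le_exp.2 (by nlinarith)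
  rw [Real.norm_eq_abs, abs_mul, abs_of_pos (exp_pos _), exp_add, exp_add, ← mul_add]
  gcongr
  calc |exp (s * b) - exp (s * a)| ≤ |exp (s * b)| + |exp (s * a)| := abs_sub _ _
    _ ≤ exp (b' * s) + exp (a' * s) := by
        rw [abs_of_pos (exp_pos _), abs_of_pos (exp_pos _)]
        exact add_le_add hb' ha'

lemma hasDerivAt_K_integrand {s : ℝ} (hs : s ≠ 0) (a b v : ℝ) :
    HasDerivAt (fun v => exp (-s ^ 2 / 2) / s * (exp (s * (b + v)) - exp (s * (a + v))))
      (exp (-s ^ 2 / 2) * (exp (s * (b + v)) - exp (s * (a + v)))) v := by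
  have hb := (((hasDerivAt_id v).const_add b).const_mul s).exp
  have ha := (((hasDerivAt_id v).const_add a).const_mul s).exp
  refine ((hb.sub ha).const_mul (exp (-s ^ 2 / 2) / s)).congr_deriv ?_
  simp only [id_eq]
  field_simp

/-- Shifting both arguments by `v` multiplies the bracket by `e^{s v}`, so `∂/∂v` cancels the `1/s`. -/
theorem hasDerivAt_K_add (a b u : ℝ) :
    HasDerivAt (fun v => K (a + v) (b + v))
      (∫ s in Ioi 0, exp (-s ^ 2 / 2) * (exp (s * (b + u)) - exp (s * (a + u)))) u := by
  refine (hasDerivAt_integral_of_dominated_loc_of_deriv_le (μ := volume.restrict (Ioi 0))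
    (F := fun v s => exp (-s ^ 2 / 2) / s * (exp (s * (b + v)) - exp (s * (a + v))))
    (F' := fun v s => exp (-s ^ 2 / 2) * (exp (s * (b + v)) - exp (s * (a + v))))
    (bound := fun s => exp (-s ^ 2 / 2 + (b + u + 1) * s) + exp (-s ^ 2 / 2 + (a + u + 1) * s))
    (Metric.ball_mem_nhds u one_pos) (Eventually.of_forall fun v => by fun_prop)
    (integrableOn_K_integrand (a + u) (b + u)) (by fun_prop) ?_
    ((integrable_exp_neg_sq_div_two_add_mul _).add
      (integrable_exp_neg_sq_div_two_add_mul _)).integrableOn ?_).2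
  · filter_upwards [self_mem_ae_restrict measurableSet_Ioi] with s hs v hv
    have hvu : v ≤ u + 1 := by
      rw [Metric.mem_ball, Real.dist_eq] at hv
      linarith [le_abs_self (v - u)]
    exact norm_K_deriv_integrand_le (le_of_lt hs) (by linarith) (by linarith)
  · filter_upwards [self_mem_ae_restrict measurableSet_Ioi] with s hs v _
    exact hasDerivAt_K_integrand (ne_of_gt hs) a b v

theorem F_hasDerivAt_general (VR VF bEE bIE τE aE ν : ℝ)
    (NIfun NIfun' : ℝ → ℝ)
    (hNIderiv : ∀ NE : ℝ, 0 ≤ NE → HasDerivAt NIfun (NIfun' NE) NE) :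
    ∀ NE ∈ Set.Ioo (0 : ℝ) (1 / τE),
      HasDerivAt (fun x => x * (τE + I1 VR VF bEE bIE aE ν x (NIfun x)))
        (I1 VR VF bEE bIE aE ν NE (NIfun NE) + τE +
          NE * (-(bEE / Real.sqrt aE) + bIE / Real.sqrt aE * NIfun' NE) *
            ∫ s in Set.Ioi (0 : ℝ), Real.exp (-s ^ 2 / 2) *
              (Real.exp (s * wFE VR VF bEE bIE aE ν NE (NIfun NE)) -
                Real.exp (s * wRE VR VF bEE bIE aE ν NE (NIfun NE))))
        NE := by
  intro NE hNE
  set shift : ℝ → ℝ := fun x => (bIE * NIfun x - bEE * x) / √aE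
  have hwF : ∀ x, wFE VR VF bEE bIE aE ν x (NIfun x) = VF / √aE + shift x := fun x => by
    simp only [wFE, shift]; ring
  have hwR : ∀ x, wRE VR VF bEE bIE aE ν x (NIfun x) = VR / √aE + shift x := fun x => by
    simp only [wRE, shift]; ring
  have hI1 : ∀ x, I1 VR VF bEE bIE aE ν x (NIfun x) = K (VR / √aE + shift x) (VF / √aE + shift x) :=
    fun x => by rw [I1, hwF, hwR]
  have hshift : HasDerivAt shift (-(bEE / √aE) + bIE / √aE * NIfun' NE) NE := by
    refine ((((hNIderiv NE hNE.1.le).const_mul bIE).sub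
      ((hasDerivAt_id NE).const_mul bEE)).div_const √aE).congr_deriv ?_
    ring
  have hK := (hasDerivAt_K_add (VR / √aE) (VF / √aE) (shift NE)).comp NE hshift
  simp only [hI1, hwF, hwR]
  refine ((hasDerivAt_id' NE).mul (hK.const_add τE)).congr_deriv ?_
  simp only [Function.comp_apply]
  ring

theorem F_hasDerivAt (VR VF bEE bIE bEI bII τE τI aE aI ν : ℝ)
    (hV : VR < VF) (hbEE : 0 < bEE) (hbIE : 0 < bIE) (hbEI : 0 < bEI) (hbII : 0 < bII)
    (hτE : 0 < τE) (hτI : 0 < τI) (haE : 0 < aE) (haI : 0 < aI) (hν : 0 ≤ ν)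
    (NIfun NIfun' : ℝ → ℝ)
    (hNIfun : ∀ NE : ℝ, 0 ≤ NE → NIfun NE ∈ Set.Ioo 0 (1 / τI) ∧
      NIfun NE * (τI + I2 VR VF bEE bEI bII aI ν NE (NIfun NE)) = 1)
    (hNIderiv : ∀ NE : ℝ, 0 ≤ NE → HasDerivAt NIfun (NIfun' NE) NE) :
    ∀ NE ∈ Set.Ioo (0 : ℝ) (1 / τE),
      HasDerivAt (fun x => x * (τE + I1 VR VF bEE bIE aE ν x (NIfun x)))
        (I1 VR VF bEE bIE aE ν NE (NIfun NE) + τE +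
          NE * (-(bEE / Real.sqrt aE) + bIE / Real.sqrt aE * NIfun' NE) *
            ∫ s in Set.Ioi (0 : ℝ), Real.exp (-s ^ 2 / 2) *
              (Real.exp (s * wFE VR VF bEE bIE aE ν NE (NIfun NE)) -
                Real.exp (s * wRE VR VF bEE bIE aE ν NE (NIfun NE))))
        NE :=
  F_hasDerivAt_general VR VF bEE bIE τE aE ν NIfun NIfun' hNIderiv
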